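/- Let H and I be Hilbert spaces, m, n positive integers, and T : H^{⊕m} → I^{⊕n} a bounded linear operator with block components T_{i,j} = Q_i ∘ T ∘ R_j^* where Q_i : I^{⊕n} → I and R_j : H^{⊕m} → H are the coordinate projections. Then the operator norm of T satisfies ‖T‖ ≤ (∑_{i=1}^{n} ‖∑_{j=1}^{m} T_{i,j} T_{i,j}^*‖)^{1/2}. -/

import Mathlib

/-! The `i`-th block row of `T` is the row operator `R_i v = ∑ j, T i j (v j)`, whose adjoint is the
column `w ↦ (T i j)† w`, so `R_i R_i† = ∑ j, T i j (T i j)†` and the C⋆-identity gives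
`‖R_i‖² = ‖∑ j, T i j (T i j)†‖`. Summing `‖R_i v‖² ≤ ‖R_i‖² ‖v‖²` over the rows bounds `‖T v‖²`. -/

open ContinuousLinearMap

section RowOperator

variable {𝕜 ι E F : Type*} [RCLike 𝕜] [Fintype ι]
  [NormedAddCommGroup E] [InnerProductSpace 𝕜 E] [NormedAddCommGroup F] [InnerProductSpace 𝕜 F]

noncomputable def rowOp (A : ι → E →L[𝕜] F) : PiLp 2 (fun _ : ι => E) →L[𝕜] F :=
  ∑ j, A j ∘L PiLp.proj 2 (fun _ : ι => E) j

@[simp]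
theorem rowOp_apply (A : ι → E →L[𝕜] F) (v : PiLp 2 (fun _ : ι => E)) :
    rowOp A v = ∑ j, A j (v j) := by
  simp [rowOp]

variable [CompleteSpace E] [CompleteSpace F]

theorem adjoint_rowOp_apply (A : ι → E →L[𝕜] F) (w : F) :
    (rowOp A).adjoint w = WithLp.toLp 2 (fun j => (A j).adjoint w) := by
  refine ext_inner_left 𝕜 fun v => ?_
  simp [PiLp.inner_apply, sum_inner, adjoint_inner_right]

theorem rowOp_comp_adjoint (A : ι → E →L[𝕜] F) :
    rowOp A ∘L (rowOp A).adjoint = ∑ j, A j ∘L (A j).adjoint := by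
  ext w
  simp [adjoint_rowOp_apply]

theorem norm_rowOp_sq (A : ι → E →L[𝕜] F) :
    ‖rowOp A‖ ^ 2 = ‖∑ j, A j ∘L (A j).adjoint‖ := by
  have hCstar := norm_adjoint_comp_self (rowOp A).adjoint
  rw [adjoint_adjoint, LinearIsometryEquiv.norm_map, rowOp_comp_adjoint] at hCstar
  rw [hCstar, sq]

end RowOperator

theorem ContinuousLinearMap.opNorm_le_sqrt_sum_sq_opNorm_proj_comp {𝕜 X ι : Type*} [Fintype ι]
    [NontriviallyNormedField 𝕜] [SeminormedAddCommGroup X] [NormedSpace 𝕜 X] {G : ι → Type*}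
    [∀ i, NormedAddCommGroup (G i)] [∀ i, NormedSpace 𝕜 (G i)]
    (T : X →L[𝕜] PiLp 2 G) : ‖T‖ ≤ √(∑ i, ‖PiLp.proj 2 G i ∘L T‖ ^ 2) := by
  refine T.opNorm_le_bound (Real.sqrt_nonneg _) fun x => ?_
  rw [← Real.sqrt_sq (norm_nonneg x), ← Real.sqrt_mul (by positivity),
    ← Real.sqrt_sq (norm_nonneg (T x)), PiLp.norm_sq_eq_of_L2, Finset.sum_mul]
  refine Real.sqrt_le_sqrt (Finset.sum_le_sum fun i _ => ?_)
  rw [← mul_pow]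
  exact pow_le_pow_left₀ (norm_nonneg _) ((PiLp.proj 2 G i ∘L T).le_opNorm x) 2

theorem block_opNorm_le_general
    {H I : Type*} [NormedAddCommGroup H] [InnerProductSpace ℂ H] [CompleteSpace H]
    [NormedAddCommGroup I] [InnerProductSpace ℂ I] [CompleteSpace I]
    (m n : ℕ)
    (T : PiLp 2 (fun _ : Fin m => H) →L[ℂ] PiLp 2 (fun _ : Fin n => I))
    (Tij : Fin n → Fin m → (H →L[ℂ] I))
    (hblock : ∀ (v : PiLp 2 (fun _ : Fin m => H)) (i : Fin n),
      T v i = ∑ j, Tij i j (v j)) :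
    ‖T‖ ≤ Real.sqrt (∑ i, ‖∑ j, Tij i j ∘L (Tij i j).adjoint‖) := by
  have hrow (i : Fin n) : PiLp.proj 2 (fun _ : Fin n => I) i ∘L T = rowOp (Tij i) := by
    ext v
    simp [hblock]
  simpa only [hrow, norm_rowOp_sq] using T.opNorm_le_sqrt_sum_sq_opNorm_proj_comp

/-- Block operator-norm bound: if `T : H^{⊕m} →L I^{⊕n}` has block components
`Tij i j`, then `‖T‖ ≤ (∑ i, ‖∑ j, Tij i j ∘ (Tij i j)*‖)^{1/2}`. -/
theorem block_opNorm_le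
    {H I : Type*} [NormedAddCommGroup H] [InnerProductSpace ℂ H] [CompleteSpace H]
    [NormedAddCommGroup I] [InnerProductSpace ℂ I] [CompleteSpace I]
    (m n : ℕ) (hm : 0 < m) (hn : 0 < n)
    (T : PiLp 2 (fun _ : Fin m => H) →L[ℂ] PiLp 2 (fun _ : Fin n => I))
    (Tij : Fin n → Fin m → (H →L[ℂ] I))
    (hblock : ∀ (v : PiLp 2 (fun _ : Fin m => H)) (i : Fin n),
      T v i = ∑ j, Tij i j (v j)) :
    ‖T‖ ≤ Real.sqrt (∑ i, ‖∑ j, Tij i j ∘L (Tij i j).adjoint‖) :=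
  block_opNorm_le_general m n T Tij hblock
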